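/- Let K be a field, let (A, ∇, 1) be an associative unital K-algebra with multiplication map ∇ : A ⊗ A → A, let c : A ⊗ A → A ⊗ A be a K-linear map with c(1 ⊗ a) = a ⊗ 1 and c(a ⊗ 1) = 1 ⊗ a for all a ∈ A, and let Δ : A → A ⊗ A be a K-linear map satisfying Δ ∘ ∇ = (∇ ⊗ ∇) ∘ (id_A ⊗ c ⊗ id_A) ∘ (Δ ⊗ Δ). Let P := {a ∈ A : Δ(a) = a ⊗ 1 + 1 ⊗ a}, suppose c maps the image of P ⊗ P in A ⊗ A into itself, and suppose that for some λ ∈ K one has ∇(c(z)) = λ·∇(z) for all z in the image of P ⊗ P. Then (c + id)(c − λ·id)(z) = 0 for all z in the image of P ⊗ P; that is, the restriction of c to the image of P ⊗ P is of Hecke type of mark λ. -/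
import Mathlib


open TensorProduct

noncomputable section

variable {K : Type*} [Field K] {A : Type*} [Ring A] [Algebra K A]

/-- The endomorphism `id_A ⊗ c ⊗ id_A` of `(A ⊗ A) ⊗ (A ⊗ A)`, acting by `c` on the two
middle tensor factors. -/
def mid4 (c : A ⊗[K] A →ₗ[K] A ⊗[K] A) :
    (A ⊗[K] A) ⊗[K] (A ⊗[K] A) →ₗ[K] (A ⊗[K] A) ⊗[K] (A ⊗[K] A) :=
  let e : ((A ⊗[K] A) ⊗[K] (A ⊗[K] A)) ≃ₗ[K] (A ⊗[K] ((A ⊗[K] A) ⊗[K] A)) :=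
    (TensorProduct.assoc K A A (A ⊗[K] A)).trans
      (TensorProduct.congr (LinearEquiv.refl K A) (TensorProduct.assoc K A A A).symm)
  e.symm.toLinearMap ∘ₗ LinearMap.lTensor A (LinearMap.rTensor A c) ∘ₗ e.toLinearMap

/-- The set of primitive elements of `A` relative to `Δ`. -/
def primSet (Δ : A →ₗ[K] A ⊗[K] A) : Set A :=
  {a : A | Δ a = a ⊗ₜ[K] (1 : A) + (1 : A) ⊗ₜ[K] a}

/-- The image of `P ⊗ P` in `A ⊗ A`, where `P` is the set of primitives: the span of the
elements `p ⊗ q` with `p, q` primitive. -/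
def primTensorSq (Δ : A →ₗ[K] A ⊗[K] A) : Submodule K (A ⊗[K] A) :=
  Submodule.span K {z | ∃ p ∈ primSet Δ, ∃ q ∈ primSet Δ, z = p ⊗ₜ[K] q}

set_option synthInstance.maxHeartbeats 800000 in
set_option maxHeartbeats 1600000 in
lemma mid4_mul_apply (c : A ⊗[K] A →ₗ[K] A ⊗[K] A) (a b d e : A) :
    TensorProduct.map (LinearMap.mul' K A) (LinearMap.mul' K A)
      (mid4 c ((a ⊗ₜ[K] b) ⊗ₜ[K] (d ⊗ₜ[K] e))) =
    TensorProduct.map (LinearMap.mulLeft K a) (LinearMap.mulRight K e) (c (b ⊗ₜ[K] d)) := by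
  simp only [mid4, LinearMap.coe_comp, Function.comp_apply, LinearEquiv.coe_coe,
    LinearEquiv.trans_apply, assoc_tmul, congr_tmul, LinearEquiv.refl_apply,
    assoc_symm_tmul, LinearMap.lTensor_tmul, LinearMap.rTensor_tmul]
  generalize c (b ⊗ₜ[K] d) = w
  induction w using TensorProduct.induction_on with
  | zero => simp
  | tmul u v => simp [LinearMap.mul'_apply, mul_assoc]
  | add x y hx hy => simp_all [tmul_add, add_tmul]

lemma delta_mul_of_mem (c : A ⊗[K] A →ₗ[K] A ⊗[K] A)
    (hc1 : ∀ a : A, c ((1 : A) ⊗ₜ[K] a) = a ⊗ₜ[K] (1 : A))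
    (hc2 : ∀ a : A, c (a ⊗ₜ[K] (1 : A)) = (1 : A) ⊗ₜ[K] a)
    (Δ : A →ₗ[K] A ⊗[K] A)
    (hcompat : Δ ∘ₗ LinearMap.mul' K A =
      TensorProduct.map (LinearMap.mul' K A) (LinearMap.mul' K A) ∘ₗ mid4 c ∘ₗ
        TensorProduct.map Δ Δ) :
    ∀ z ∈ primTensorSq Δ,
      Δ (LinearMap.mul' K A z) =
        (LinearMap.mul' K A z) ⊗ₜ[K] (1 : A) + (1 : A) ⊗ₜ[K] (LinearMap.mul' K A z)
          + z + c z := by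
  intro z hz
  induction hz using Submodule.span_induction with
  | mem z hzmem =>
    obtain ⟨p, hp, q, hq, rfl⟩ := hzmem
    have key := LinearMap.congr_fun hcompat (p ⊗ₜ[K] q)
    simp only [LinearMap.coe_comp, Function.comp_apply, TensorProduct.map_tmul] at key
    rw [hp, hq] at key
    rw [key]
    simp only [tmul_add, add_tmul, map_add, mid4_mul_apply, hc1, hc2]
    simp only [TensorProduct.map_tmul, LinearMap.mulLeft_apply, LinearMap.mulRight_apply,
      mul_one, one_mul, LinearMap.mul'_apply]
    have h3 : TensorProduct.map (LinearMap.mulLeft K (1 : A)) (LinearMap.mulRight K (1 : A))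
        (c (p ⊗ₜ[K] q)) = c (p ⊗ₜ[K] q) := by
      rw [LinearMap.mulLeft_one, LinearMap.mulRight_one]
      simp [TensorProduct.map_id]
    rw [h3]
    abel
  | zero => simp
  | add x y hx hy ihx ihy =>
    simp only [map_add, tmul_add, add_tmul, ihx, ihy]
    abel
  | smul a x hx ihx =>
    simp only [map_smul, ihx, smul_add, TensorProduct.smul_tmul', tmul_smul]

/-- **Proposition.**  Let `c : A ⊗ A → A ⊗ A` be unital and let `Δ` be multiplicative with
respect to the `c`-twisted multiplication.  Suppose `c` preserves the image of `P ⊗ P`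
(`P` the primitives) and `∇ ∘ c = lam • ∇` on the image of `P ⊗ P`.  Then
`(c + id)(c - lam•id) = 0` on the image of `P ⊗ P`, i.e. the restriction of `c` is of
Hecke type of mark `lam`. -/
theorem hecke_of_lambda_cocommutative
    (c : A ⊗[K] A →ₗ[K] A ⊗[K] A)
    (hc1 : ∀ a : A, c ((1 : A) ⊗ₜ[K] a) = a ⊗ₜ[K] (1 : A))
    (hc2 : ∀ a : A, c (a ⊗ₜ[K] (1 : A)) = (1 : A) ⊗ₜ[K] a)
    (Δ : A →ₗ[K] A ⊗[K] A)
    (hcompat : Δ ∘ₗ LinearMap.mul' K A =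
      TensorProduct.map (LinearMap.mul' K A) (LinearMap.mul' K A) ∘ₗ mid4 c ∘ₗ
        TensorProduct.map Δ Δ)
    (hcP : ∀ z ∈ primTensorSq Δ, c z ∈ primTensorSq Δ)
    (lam : K)
    (hmul : ∀ z ∈ primTensorSq Δ, LinearMap.mul' K A (c z) = lam • LinearMap.mul' K A z) :
    ∀ z ∈ primTensorSq Δ,
      ((c + LinearMap.id) ∘ₗ (c - lam • (LinearMap.id : A ⊗[K] A →ₗ[K] A ⊗[K] A))) z
        = 0 := by
  intro z hz
  have key := delta_mul_of_mem c hc1 hc2 Δ hcompat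
  have h1 := key z hz
  have h2 := key (c z) (hcP z hz)
  rw [hmul z hz] at h2
  rw [map_smul, h1] at h2
  have h3 : lam • z + lam • c z = c z + c (c z) := by
    rw [smul_add, smul_add, smul_add, TensorProduct.smul_tmul', tmul_smul] at h2
    exact add_left_cancel (by rw [← add_assoc, ← add_assoc]; exact h2)
  have hcc : c (c z) = lam • z + lam • c z - c z :=
    (eq_sub_iff_add_eq).2 (by rw [add_comm]; exact h3.symm)
  simp only [LinearMap.coe_comp, Function.comp_apply, LinearMap.sub_apply, LinearMap.add_apply,
    LinearMap.smul_apply, LinearMap.id_apply, map_sub, map_smul]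
  rw [hcc]
  module

end
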